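/- Let s = 1/(2d), d ≥ 3, and for integer l ≥ 1 define η₂[l](x) = Σ_u D^{*2}(u) D(x-u) Σ_{s'} D(s')^l D(u-s') D^{*2}(x-s'). Then η₂[l](e_1) = s^{l+4}(5 − 2s − 8s²), η₂[l](2e_1+e_2) = 8 s^{l+6}, and η₂[l](e_1+e_2+e_3) = 24 s^{l+6}. -/

import Mathlib

/-!
`D` is `s` times the indicator of the `2d` unit vectors `±eᵢ`, so every lattice sum in `η₂`
collapses to a finite sum over unit steps, and `D^{*2}(w)` is `s²` times the number of two-step
paths to `w`: it equals `s` at `0`, `s²` at `±2eᵢ`, `2s²` at `±eᵢ ± eⱼ` and vanishes once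
`|w|₁ > 2`. For `|x|₁ = 3` only steps towards `x` contribute, leaving a handful of paths; at
`e₁` the `2(d - 1)` sideways steps contribute terms linear in `d`, which `2ds = 1` turns into the
stated polynomial in `s`.
-/

open scoped BigOperators

noncomputable def nnD (d : ℕ) (x : Fin d → ℤ) : ℝ :=
  if (∑ i, (x i).natAbs) = 1 then 1 / (2 * d) else 0

noncomputable def conv {d : ℕ} (f g : (Fin d → ℤ) → ℝ) (x : Fin d → ℤ) : ℝ :=
  ∑' y : Fin d → ℤ, f y * g (x - y)

/-- `η₂[l](x) = ∑_u D^{*2}(u) D(x-u) ∑_{s'} D(s')^l D(u-s') D^{*2}(x-s')`. -/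
noncomputable def eta2 (d l : ℕ) (x : Fin d → ℤ) : ℝ :=
  ∑' u : Fin d → ℤ,
    conv (nnD d) (nnD d) u * nnD d (x - u) *
      ∑' s' : Fin d → ℤ, nnD d s' ^ l * nnD d (u - s') * conv (nnD d) (nnD d) (x - s')

open Finset

noncomputable def stepWeight (d : ℕ) : ℝ := 1 / (2 * d)

def l1Norm {d : ℕ} (x : Fin d → ℤ) : ℤ := ∑ i, |x i|

section L1Norm

variable {d : ℕ}

@[simp] lemma l1Norm_zero : l1Norm (0 : Fin d → ℤ) = 0 := by simp [l1Norm]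

@[simp] lemma l1Norm_add_single (x : Fin d → ℤ) (i : Fin d) (c : ℤ) :
    l1Norm (x + Pi.single i c) = l1Norm x - |x i| + |x i + c| := by
  have h : ∑ k, (|(x + Pi.single i c : Fin d → ℤ) k| - |x k|) = |x i + c| - |x i| :=
    (Fintype.sum_eq_single i fun k hk => by simp [hk]).trans (by simp)
  rw [sum_sub_distrib] at h
  unfold l1Norm
  linarith

@[simp] lemma l1Norm_sub_single (x : Fin d → ℤ) (i : Fin d) (c : ℤ) :
    l1Norm (x - Pi.single i c) = l1Norm x - |x i| + |x i - c| := by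
  rw [sub_eq_add_neg, ← Pi.single_neg, l1Norm_add_single, ← sub_eq_add_neg]

@[simp] lemma l1Norm_single (i : Fin d) (c : ℤ) : l1Norm (Pi.single i c) = |c| := by
  simpa using l1Norm_add_single 0 i c

@[simp] lemma l1Norm_neg (x : Fin d → ℤ) : l1Norm (-x) = l1Norm x := by
  simp [l1Norm]

lemma l1Norm_add_le (x y : Fin d → ℤ) : l1Norm (x + y) ≤ l1Norm x + l1Norm y := by
  unfold l1Norm
  rw [← sum_add_distrib]
  exact sum_le_sum fun i _ => abs_add_le _ _

lemma l1Norm_eq_one_iff {x : Fin d → ℤ} :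
    l1Norm x = 1 ↔ ∃ i, x = Pi.single i 1 ∨ x = Pi.single i (-1) := by
  refine ⟨fun hx => ?_, by rintro ⟨i, rfl | rfl⟩ <;> simp⟩
  obtain ⟨i, hi⟩ : ∃ i, x i ≠ 0 := by
    by_contra! h
    simp [l1Norm, h] at hx
  have hsplit := add_sum_erase univ (fun k => |x k|) (mem_univ i)
  have hrest_nonneg : 0 ≤ ∑ k ∈ univ.erase i, |x k| := sum_nonneg fun _ _ => abs_nonneg _
  have hxi_pos := abs_pos.mpr hi
  unfold l1Norm at hx
  have hxi : |x i| = 1 := by omega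
  have hrest : ∑ k ∈ univ.erase i, |x k| = 0 := by omega
  have hx_eq : x = Pi.single i (x i) := by
    ext k
    rcases eq_or_ne k i with rfl | hk
    · simp
    · have := (sum_eq_zero_iff_of_nonneg fun _ _ => abs_nonneg _).mp hrest k (by simp [hk])
      simp [hk, abs_eq_zero.mp this]
  rcases abs_eq zero_le_one |>.mp hxi with h | h <;> rw [h] at hx_eq
  exacts [⟨i, .inl hx_eq⟩, ⟨i, .inr hx_eq⟩]

end L1Norm

section UnitSteps

variable {d : ℕ}

def unitSum (f : (Fin d → ℤ) → ℝ) : ℝ := ∑ i, (f (Pi.single i 1) + f (Pi.single i (-1)))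

lemma unitSum_const_mul (c : ℝ) (f : (Fin d → ℤ) → ℝ) :
    unitSum (fun e => c * f e) = c * unitSum f := by
  simp only [unitSum, mul_sum, mul_add]

lemma nnD_eq_ite (x : Fin d → ℤ) : nnD d x = if l1Norm x = 1 then stepWeight d else 0 := by
  have h : (∑ i, (x i).natAbs = 1) ↔ l1Norm x = 1 := by
    rw [l1Norm, ← Nat.cast_inj (R := ℤ)]
    push_cast
    simp
  simp only [nnD, stepWeight, h]

lemma single_eq_single_iff_of_ne_zero {i j : Fin d} {a b : ℤ} (ha : a ≠ 0) :
    (Pi.single i a : Fin d → ℤ) = Pi.single j b ↔ i = j ∧ a = b := by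
  refine ⟨fun h => ?_, by rintro ⟨rfl, rfl⟩; rfl⟩
  obtain rfl : i = j := by
    by_contra hij
    simpa [Pi.single_eq_of_ne hij, ha] using congrFun h i
  exact ⟨rfl, Pi.single_injective i h⟩

lemma tsum_nnD_pow_mul {l : ℕ} (hl : l ≠ 0) (f : (Fin d → ℤ) → ℝ) :
    ∑' y, nnD d y ^ l * f y = stepWeight d ^ l * unitSum f := by
  classical
  set signs : Finset ℤ := {1, -1}
  have hsigns : ∀ c ∈ signs, c ≠ 0 := by simp [signs]
  set T := (univ ×ˢ signs).image fun p : Fin d × ℤ => (Pi.single p.1 p.2 : Fin d → ℤ)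
  have hT : ∀ y, y ∈ T ↔ l1Norm y = 1 := by
    intro y
    rw [l1Norm_eq_one_iff]
    simp [T, signs, eq_comm (a := y)]
  rw [tsum_eq_sum (s := T) fun y hy => by
      rw [nnD_eq_ite, if_neg (by rwa [← hT]), zero_pow hl, zero_mul],
    sum_congr rfl fun y hy => by rw [nnD_eq_ite, if_pos ((hT y).mp hy)], ← mul_sum,
    sum_image fun a ha b _ h => by
      simp only [coe_product, Set.mem_prod, mem_coe] at ha
      rw [single_eq_single_iff_of_ne_zero (hsigns _ ha.2)] at h
      exact Prod.ext h.1 h.2,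
    sum_product, unitSum]
  simp [signs]

lemma tsum_nnD_mul (f : (Fin d → ℤ) → ℝ) :
    ∑' y, nnD d y * f y = stepWeight d * unitSum f := by
  simpa using tsum_nnD_pow_mul one_ne_zero f

lemma conv_nnD_eq (w : Fin d → ℤ) :
    conv (nnD d) (nnD d) w
      = stepWeight d * ∑ i, (nnD d (w - Pi.single i 1) + nnD d (w + Pi.single i 1)) := by
  rw [conv, tsum_nnD_mul, unitSum]
  simp only [Pi.single_neg, sub_neg_eq_add]

lemma eta2_eq {l : ℕ} (hl : l ≠ 0) (x : Fin d → ℤ) :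
    eta2 d l x = stepWeight d ^ (l + 1) * unitSum fun e =>
      conv (nnD d) (nnD d) (x - e) *
        unitSum fun e' => conv (nnD d) (nnD d) (x - e') * nnD d (x - e - e') := by
  have hinner : ∀ u, ∑' s', nnD d s' ^ l * nnD d (u - s') * conv (nnD d) (nnD d) (x - s')
      = stepWeight d ^ l * unitSum fun e' => conv (nnD d) (nnD d) (x - e') * nnD d (u - e') := by
    intro u
    rw [← tsum_nnD_pow_mul hl]
    exact tsum_congr fun _ => by ring
  rw [eta2, ← (Equiv.subLeft x).tsum_eq]
  simp only [Equiv.subLeft_apply, sub_sub_cancel, hinner]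
  rw [pow_succ', mul_assoc, ← unitSum_const_mul, ← tsum_nnD_mul]
  exact tsum_congr fun _ => by ring

end UnitSteps

section Convolution

variable {d : ℕ}

lemma conv_nnD_eq_zero_of_two_lt {w : Fin d → ℤ} (hw : 2 < l1Norm w) :
    conv (nnD d) (nnD d) w = 0 := by
  have h : ∀ e : Fin d → ℤ, l1Norm e = 1 → nnD d (w - e) = 0 := by
    intro e he
    have := l1Norm_add_le (w - e) e
    rw [sub_add_cancel] at this
    rw [nnD_eq_ite, if_neg (by omega)]
  simp [conv, tsum_nnD_mul, unitSum, h]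

lemma nnD_sub_single_add_nnD_add_single {w : Fin d → ℤ} (hw : l1Norm w = 2) (k : Fin d) :
    nnD d (w - Pi.single k 1) + nnD d (w + Pi.single k 1)
      = if w k = 0 then 0 else stepWeight d := by
  simp only [nnD_eq_ite, l1Norm_sub_single, l1Norm_add_single, hw]
  rcases lt_trichotomy (w k) 0 with h | h | h
  · simp [abs_of_neg h, abs_of_nonpos (show w k + 1 ≤ 0 by omega),
      abs_of_neg (show w k - 1 < 0 by omega), h.ne]
    omega
  · simp [h]
  · simp [abs_of_pos h, abs_of_nonneg (show 0 ≤ w k - 1 by omega),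
      abs_of_pos (show 0 < w k + 1 by omega), h.ne']
    omega

lemma conv_nnD_of_l1Norm_eq_two {w : Fin d → ℤ} (hw : l1Norm w = 2) :
    conv (nnD d) (nnD d) w = stepWeight d ^ 2 * #{k | w k ≠ 0} := by
  rw [conv_nnD_eq, sum_congr rfl fun k _ => nnD_sub_single_add_nnD_add_single hw k,
    sum_ite, sum_const_zero, zero_add, sum_const, nsmul_eq_mul]
  ring

lemma two_mul_mul_stepWeight (hd : d ≠ 0) : 2 * d * stepWeight d = 1 := by
  rw [stepWeight]; field_simp

lemma conv_nnD_zero (hd : d ≠ 0) : conv (nnD d) (nnD d) 0 = stepWeight d := by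
  rw [conv_nnD_eq]
  simp [nnD_eq_ite]
  linear_combination stepWeight d * two_mul_mul_stepWeight hd

lemma conv_nnD_single {p : Fin d} {c : ℤ} (hc : |c| = 2) :
    conv (nnD d) (nnD d) (Pi.single p c) = stepWeight d ^ 2 := by
  have hc0 : c ≠ 0 := by rintro rfl; simp at hc
  rw [conv_nnD_of_l1Norm_eq_two (by simpa using hc)]
  simp [Pi.single_apply, hc0, filter_eq']

lemma conv_nnD_single_add_single {p q : Fin d} (hpq : p ≠ q) {a b : ℤ} (ha : |a| = 1)
    (hb : |b| = 1) :
    conv (nnD d) (nnD d) (Pi.single p a + Pi.single q b) = 2 * stepWeight d ^ 2 := by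
  have ha0 : a ≠ 0 := by rintro rfl; simp at ha
  have hb0 : b ≠ 0 := by rintro rfl; simp at hb
  have hsupp : ({k | (Pi.single p a + Pi.single q b : Fin d → ℤ) k ≠ 0} : Finset (Fin d))
      = {p, q} := by
    ext k
    by_cases hkp : k = p <;> by_cases hkq : k = q <;> simp_all [Pi.single_apply]
  rw [conv_nnD_of_l1Norm_eq_two (by simp [hpq, ha, hb]), hsupp, card_pair hpq]
  ring

end Convolution

section Values

variable {d l : ℕ}

lemma unitSum_conv_single_sub_mul (p : Fin d) (g : (Fin d → ℤ) → ℝ) :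
    unitSum (fun e => conv (nnD d) (nnD d) (Pi.single p 1 - e) * g e)
      = stepWeight d * g (Pi.single p 1) + stepWeight d ^ 2 * g (Pi.single p (-1))
        + 2 * stepWeight d ^ 2 *
          ∑ i ∈ univ.erase p, (g (Pi.single i 1) + g (Pi.single i (-1))) := by
  have hd : d ≠ 0 := by rintro rfl; exact p.elim0
  have hterm : ∀ i ∈ univ.erase p,
      conv (nnD d) (nnD d) (Pi.single p 1 - Pi.single i 1) * g (Pi.single i 1)
        + conv (nnD d) (nnD d) (Pi.single p 1 - Pi.single i (-1)) * g (Pi.single i (-1))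
      = 2 * stepWeight d ^ 2 * (g (Pi.single i 1) + g (Pi.single i (-1))) := fun i hi => by
    have hpi := (ne_of_mem_erase hi).symm
    rw [sub_eq_add_neg, ← Pi.single_neg, sub_eq_add_neg, ← Pi.single_neg, neg_neg,
      conv_nnD_single_add_single hpi (by norm_num) (by norm_num),
      conv_nnD_single_add_single hpi (by norm_num) (by norm_num)]
    ring
  rw [unitSum, ← add_sum_erase _ _ (mem_univ p), sub_self, ← Pi.single_sub, conv_nnD_zero hd,
    conv_nnD_single (by norm_num), sum_congr rfl hterm, mul_sum]

lemma unitSum_conv_single_two_add_single_sub_mul {p q : Fin d} (hpq : p ≠ q)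
    (g : (Fin d → ℤ) → ℝ) :
    unitSum (fun e => conv (nnD d) (nnD d) (Pi.single p 2 + Pi.single q 1 - e) * g e)
      = 2 * stepWeight d ^ 2 * g (Pi.single p 1) + stepWeight d ^ 2 * g (Pi.single q 1) := by
  set x : Fin d → ℤ := Pi.single p 2 + Pi.single q 1 with hx
  have hxp : x - Pi.single p 1 = Pi.single p 1 + Pi.single q 1 := by
    ext k
    by_cases hkp : k = p <;> by_cases hkq : k = q <;> simp_all
  have hxq : x - Pi.single q 1 = Pi.single p 2 := by
    ext k
    by_cases hkp : k = p <;> by_cases hkq : k = q <;> simp_all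
  rw [unitSum, Fintype.sum_eq_add p q hpq]
  · rw [hxp, hxq, conv_nnD_single_add_single hpq (by norm_num) (by norm_num),
      conv_nnD_single (by norm_num),
      conv_nnD_eq_zero_of_two_lt (w := x - Pi.single p (-1)) (by simp [hx, hpq]),
      conv_nnD_eq_zero_of_two_lt (w := x - Pi.single q (-1)) (by simp [hx, hpq])]
    ring
  · rintro i ⟨hip, hiq⟩
    rw [conv_nnD_eq_zero_of_two_lt (by simp [hx, hip, hiq, hpq.symm]),
      conv_nnD_eq_zero_of_two_lt (by simp [hx, hip, hiq, hpq.symm])]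
    ring

lemma unitSum_conv_single_add_single_add_single_sub_mul {p q r : Fin d} (hpq : p ≠ q)
    (hpr : p ≠ r) (hqr : q ≠ r) (g : (Fin d → ℤ) → ℝ) :
    unitSum (fun e =>
        conv (nnD d) (nnD d) (Pi.single p 1 + Pi.single q 1 + Pi.single r 1 - e) * g e)
      = 2 * stepWeight d ^ 2 * (g (Pi.single p 1) + g (Pi.single q 1) + g (Pi.single r 1)) := by
  set x : Fin d → ℤ := Pi.single p 1 + Pi.single q 1 + Pi.single r 1 with hx
  rw [unitSum, ← sum_subset (subset_univ {p, q, r}) fun i _ hi => by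
      simp only [mem_insert, mem_singleton, not_or] at hi
      rw [conv_nnD_eq_zero_of_two_lt (by simp [hx, hi, hpq.symm, hpr.symm, hqr.symm]),
        conv_nnD_eq_zero_of_two_lt (by simp [hx, hi, hpq.symm, hpr.symm, hqr.symm])]
      ring,
    sum_insert (by simp [hpq, hpr]), sum_pair hqr]
  have hxp : x - Pi.single p 1 = Pi.single q 1 + Pi.single r 1 := by rw [hx]; abel
  have hxq : x - Pi.single q 1 = Pi.single p 1 + Pi.single r 1 := by rw [hx]; abel
  have hxr : x - Pi.single r 1 = Pi.single p 1 + Pi.single q 1 := by rw [hx]; abel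
  rw [hxp, hxq, hxr, conv_nnD_single_add_single hqr (by norm_num) (by norm_num),
    conv_nnD_single_add_single hpr (by norm_num) (by norm_num),
    conv_nnD_single_add_single hpq (by norm_num) (by norm_num),
    conv_nnD_eq_zero_of_two_lt (w := x - Pi.single p (-1))
      (by simp [hx, hpq.symm, hpr.symm, hqr.symm]),
    conv_nnD_eq_zero_of_two_lt (w := x - Pi.single q (-1)) (by simp [hx, hpq, hpr.symm, hqr.symm]),
    conv_nnD_eq_zero_of_two_lt (w := x - Pi.single r (-1)) (by simp [hx, hpq, hpr, hqr])]
  ring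

lemma eta2_single (hl : l ≠ 0) (p : Fin d) :
    eta2 d l (Pi.single p 1)
      = stepWeight d ^ (l + 4) * (5 - 2 * stepWeight d - 8 * stepWeight d ^ 2) := by
  have hd : d ≠ 0 := by rintro rfl; exact p.elim0
  set s := stepWeight d
  have hcard : ((univ.erase p).card : ℝ) = d - 1 := by
    rw [card_erase_of_mem (mem_univ p), card_univ, Fintype.card_fin, Nat.cast_pred (by omega)]
  set G : (Fin d → ℤ) → ℝ := fun e => unitSum fun e' =>
    conv (nnD d) (nnD d) (Pi.single p 1 - e') * nnD d (Pi.single p 1 - e - e') with hG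
  have hG_self : G (Pi.single p 1) = s ^ 2 + s ^ 3 + 4 * (d - 1) * s ^ 3 := by
    simp only [hG, unitSum_conv_single_sub_mul]
    rw [sum_congr rfl fun j _ => show _ = 2 * s by simp [nnD_eq_ite, s]; ring,
      sum_const, nsmul_eq_mul, hcard]
    simp [nnD_eq_ite, s]
    ring
  have hG_neg : G (Pi.single p (-1)) = s ^ 2 := by
    simp only [hG, unitSum_conv_single_sub_mul]
    rw [sum_eq_zero fun j hj => by simp [nnD_eq_ite, ne_of_mem_erase hj]]
    simp [nnD_eq_ite, s, sq]
  have hG_ne : ∀ i ≠ p, ∀ c : ℤ, c = 1 ∨ c = -1 →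
      G (Pi.single i c) = s ^ 2 + 2 * s ^ 3 := by
    intro i hip c hc
    simp only [hG, unitSum_conv_single_sub_mul]
    rw [sum_eq_single_of_mem i (mem_erase.mpr ⟨hip, mem_univ i⟩) fun j hj hji => by
      rcases hc with rfl | rfl <;> simp [nnD_eq_ite, ne_of_mem_erase hj, hji, hip.symm]]
    rcases hc with rfl | rfl <;> simp [nnD_eq_ite, hip, s] <;> ring
  rw [eta2_eq hl]
  change s ^ (l + 1) * unitSum (fun e => conv (nnD d) (nnD d) (Pi.single p 1 - e) * G e) = _
  rw [unitSum_conv_single_sub_mul, hG_self, hG_neg, sum_congr rfl fun i hi => by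
    rw [hG_ne i (ne_of_mem_erase hi) 1 (.inl rfl), hG_ne i (ne_of_mem_erase hi) (-1) (.inr rfl)],
    sum_const, nsmul_eq_mul, hcard]
  linear_combination (4 * s ^ (l + 4) * (1 + s)) * two_mul_mul_stepWeight hd

lemma eta2_single_two_add_single (hl : l ≠ 0) {p q : Fin d} (hpq : p ≠ q) :
    eta2 d l (Pi.single p 2 + Pi.single q 1) = 8 * stepWeight d ^ (l + 6) := by
  rw [eta2_eq hl]
  simp only [unitSum_conv_single_two_add_single_sub_mul hpq]
  simp [nnD_eq_ite, hpq, hpq.symm]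
  ring

lemma eta2_single_add_single_add_single (hl : l ≠ 0) {p q r : Fin d} (hpq : p ≠ q)
    (hpr : p ≠ r) (hqr : q ≠ r) :
    eta2 d l (Pi.single p 1 + Pi.single q 1 + Pi.single r 1) = 24 * stepWeight d ^ (l + 6) := by
  rw [eta2_eq hl]
  simp only [unitSum_conv_single_add_single_add_single_sub_mul hpq hpr hqr]
  simp [nnD_eq_ite, hpq, hpq.symm, hpr, hpr.symm, hqr, hqr.symm]
  ring

end Values

/-- Values of `η₂[l]` at `e₁`, `2e₁+e₂` and `e₁+e₂+e₃`, with `s = 1/(2d)`. -/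
theorem eta2_values (d l : ℕ) (hd : 3 ≤ d) (hl : 1 ≤ l) :
    eta2 d l (Pi.single (⟨0, by omega⟩ : Fin d) 1)
      = (1 / (2 * (d : ℝ))) ^ (l + 4) *
          (5 - 2 * (1 / (2 * (d : ℝ))) - 8 * (1 / (2 * (d : ℝ))) ^ 2) ∧
    eta2 d l (Pi.single (⟨0, by omega⟩ : Fin d) 2 + Pi.single (⟨1, by omega⟩ : Fin d) 1)
      = 8 * (1 / (2 * (d : ℝ))) ^ (l + 6) ∧
    eta2 d l (Pi.single (⟨0, by omega⟩ : Fin d) 1 + Pi.single (⟨1, by omega⟩ : Fin d) 1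
        + Pi.single (⟨2, by omega⟩ : Fin d) 1)
      = 24 * (1 / (2 * (d : ℝ))) ^ (l + 6) := by
  have hl0 : l ≠ 0 := by omega
  have h01 : (⟨0, by omega⟩ : Fin d) ≠ ⟨1, by omega⟩ := by simp
  have h02 : (⟨0, by omega⟩ : Fin d) ≠ ⟨2, by omega⟩ := by simp
  have h12 : (⟨1, by omega⟩ : Fin d) ≠ ⟨2, by omega⟩ := by simp
  exact ⟨eta2_single hl0 _, eta2_single_two_add_single hl0 h01,
    eta2_single_add_single_add_single hl0 h01 h02 h12⟩
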